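/- Let K = 2^m for a natural number m ≥ 1. For every a ∈ ℝ^{K−1} with a_i > 0 for all i, the inequality (K−1)·b̄(a) ≤ Σ_{i=1}^{K−1} b_i(a) holds, with equality if and only if a is proportional to 1_{K−1}. Consequently, along any solution of the reduced cross-entropy gradient flow da_i/dt = a_i b_i(a)/D(a) with positive initialization, the Kullback–Leibler divergence D_KL((1/(K−1))·1_{K−1} ‖ â(t)) = −log(K−1) − (1/(K−1))·Σ_i log(â_i(t)) has nonpositive time derivative, vanishing only when â(t) = (1/(K−1))·1_{K−1}. -/

import Mathlib

/-!
Write `S = ‖a‖₁`, `â = a / S` and `v = Ψ â`. Since `Ψ` is symmetric with all column sums `K`,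
`∑ᵢ bᵢ = (∑ⱼ vⱼ) (∑ⱼ exp (-S vⱼ))` and `b̄ = ∑ⱼ vⱼ exp (-S vⱼ)`, so `(K - 1) b̄ ≤ ∑ᵢ bᵢ` is
Chebyshev's sum inequality for `v` and the decreasing function `x ↦ exp (-S x)`, with equality
iff `v` is constant. The Sylvester core `X` has column sums `-1` and `Xᵀ X = K I - J`, hence
`Ψᵀ Ψ = K (J + I)`, and `Ψ â` is constant only when `â` is.

Along the flow each `aᵢ` solves a linear equation `aᵢ' = aᵢ gᵢ` and so stays positive, and
`d/dt log âᵢ = bᵢ / D - b̄ / D`; hence `d/dt D_KL = ((K - 1) b̄ - ∑ᵢ bᵢ) / ((K - 1) D)`.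
-/

open Matrix Finset

noncomputable section

/-- The Sylvester Hadamard matrix `Φ_{2^m}`, defined recursively by `Φ₁ = (1)` and
`Φ_{2^{m+1}} = [[Φ_{2^m}, Φ_{2^m}], [Φ_{2^m}, -Φ_{2^m}]]`. -/
def sylvester : (m : ℕ) → Matrix (Fin (2 ^ m)) (Fin (2 ^ m)) ℝ
  | 0 => Matrix.of fun _ _ => 1
  | m + 1 => Matrix.of fun i j =>
      (if 2 ^ m ≤ i.val ∧ 2 ^ m ≤ j.val then -1 else 1) *
        sylvester m ⟨i.val % 2 ^ m, Nat.mod_lt _ (Nat.two_pow_pos m)⟩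
          ⟨j.val % 2 ^ m, Nat.mod_lt _ (Nat.two_pow_pos m)⟩

/-- The core `X = Φ[2:K, 2:K]` obtained by deleting the first row and column of `Φ`. -/
def hadCore (m : ℕ) : Matrix (Fin (2 ^ m - 1)) (Fin (2 ^ m - 1)) ℝ :=
  Matrix.of fun i j =>
    sylvester m ⟨i.val + 1, by have h1 := Nat.two_pow_pos m; have h2 := i.isLt; omega⟩
      ⟨j.val + 1, by have h1 := Nat.two_pow_pos m; have h2 := j.isLt; omega⟩

/-- `Ψ = 1 1ᵀ − X`. -/
def PsiM (m : ℕ) : Matrix (Fin (2 ^ m - 1)) (Fin (2 ^ m - 1)) ℝ :=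
  Matrix.of fun i j => 1 - hadCore m i j

/-- `b_i(a) = Σ_j Ψ_{ij} exp(−(Ψa)_j)`. -/
def bVec (m : ℕ) (a : Fin (2 ^ m - 1) → ℝ) (i : Fin (2 ^ m - 1)) : ℝ :=
  ∑ j, PsiM m i j * Real.exp (-((PsiM m).mulVec a j))

/-- `D(a) = 1 + Σ_j exp(−(Ψa)_j)`. -/
def Dden (m : ℕ) (a : Fin (2 ^ m - 1) → ℝ) : ℝ :=
  1 + ∑ j, Real.exp (-((PsiM m).mulVec a j))

/-- The energy `E(a) = log(1 + Σ_j exp(−(Ψa)_j))`. -/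
def energyE (m : ℕ) (a : Fin (2 ^ m - 1) → ℝ) : ℝ :=
  Real.log (1 + ∑ j, Real.exp (-((PsiM m).mulVec a j)))

/-- `b̄(a) = Σ_j â_j b_j(a)` with `â = a / ‖a‖₁`. -/
def bbar (m : ℕ) (a : Fin (2 ^ m - 1) → ℝ) : ℝ :=
  ∑ j, (a j / ∑ k, a k) * bVec m a j

/-- `M(a) = (1/2) Σ_i (â_i − 1/(K−1))²`. -/
def Mmetric (m : ℕ) (a : Fin (2 ^ m - 1) → ℝ) : ℝ :=
  (1 / 2) * ∑ i, (a i / (∑ k, a k) - 1 / ((2 : ℝ) ^ m - 1)) ^ 2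

/-- The KL divergence `D_KL((1/(K−1))·1 ‖ â) = −log(K−1) − (1/(K−1)) Σ_i log(â_i)`. -/
def klUnif (m : ℕ) (a : Fin (2 ^ m - 1) → ℝ) : ℝ :=
  -Real.log ((2 : ℝ) ^ m - 1) -
    (1 / ((2 : ℝ) ^ m - 1)) * ∑ i, Real.log (a i / ∑ j, a j)

theorem StrictAnti.sub_mul_sub_nonpos {φ : ℝ → ℝ} (hφ : StrictAnti φ) (x y : ℝ) :
    (x - y) * (φ x - φ y) ≤ 0 := by
  rcases lt_trichotomy x y with h | rfl | h
  · exact mul_nonpos_of_nonpos_of_nonneg (by linarith) (by linarith [hφ h])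
  · simp
  · exact mul_nonpos_of_nonneg_of_nonpos (by linarith) (by linarith [hφ h])

theorem StrictAnti.sub_mul_sub_eq_zero_iff {φ : ℝ → ℝ} (hφ : StrictAnti φ) {x y : ℝ} :
    (x - y) * (φ x - φ y) = 0 ↔ x = y := by
  simp [sub_eq_zero, hφ.injective.eq_iff]

section Chebyshev

variable {ι : Type*} [Fintype ι]

theorem card_mul_sum_mul_sub_sum_mul_sum {v : ι → ℝ} {μ : ℝ}
    (hμ : ∑ j, v j = Fintype.card ι * μ) (f : ι → ℝ) (y : ℝ) :
    (Fintype.card ι : ℝ) * ∑ j, v j * f j - (∑ j, v j) * ∑ j, f j =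
      Fintype.card ι * ∑ j, (v j - μ) * (f j - y) := by
  simp only [sub_mul, mul_sub, sum_sub_distrib, ← sum_mul, ← mul_sum, sum_const, card_univ,
    nsmul_eq_mul, hμ]
  ring

variable [Nonempty ι] {φ : ℝ → ℝ}

theorem StrictAnti.card_mul_sum_mul_le (hφ : StrictAnti φ) (v : ι → ℝ) :
    (Fintype.card ι : ℝ) * ∑ j, v j * φ (v j) ≤ (∑ j, v j) * ∑ j, φ (v j) := by
  rw [← sub_nonpos, card_mul_sum_mul_sub_sum_mul_sum (μ := (∑ j, v j) / Fintype.card ι)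
    (by field_simp) _ (φ ((∑ j, v j) / Fintype.card ι))]
  exact mul_nonpos_of_nonneg_of_nonpos (Nat.cast_nonneg _)
    (sum_nonpos fun j _ => hφ.sub_mul_sub_nonpos _ _)

theorem StrictAnti.card_mul_sum_mul_eq_iff (hφ : StrictAnti φ) (v : ι → ℝ) :
    (Fintype.card ι : ℝ) * ∑ j, v j * φ (v j) = (∑ j, v j) * ∑ j, φ (v j) ↔
      ∃ c, ∀ j, v j = c := by
  have hN : (Fintype.card ι : ℝ) ≠ 0 := Nat.cast_ne_zero.mpr Fintype.card_ne_zero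
  rw [← sub_eq_zero, card_mul_sum_mul_sub_sum_mul_sum (μ := (∑ j, v j) / Fintype.card ι)
    (by field_simp) _ (φ ((∑ j, v j) / Fintype.card ι)), mul_eq_zero, or_iff_right hN,
    sum_eq_zero_iff_of_nonpos fun j _ => hφ.sub_mul_sub_nonpos _ _]
  simp only [mem_univ, true_implies, hφ.sub_mul_sub_eq_zero_iff]
  refine ⟨fun h => ⟨_, h⟩, fun ⟨c, hc⟩ j => ?_⟩
  simp [hc, sum_const, card_univ, hN]

end Chebyshev

section SymmetricKernel

variable {ι : Type*} [Fintype ι] {Ψ : Matrix ι ι ℝ} {κ : ℝ}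

theorem sum_mulVec_eq_mul_sum_of_sum_col (hΨ : ∀ j, ∑ i, Ψ i j = κ) (w : ι → ℝ) :
    ∑ i, (Ψ *ᵥ w) i = κ * ∑ j, w j := by
  simp only [mulVec, dotProduct, mul_sum]
  rw [sum_comm]
  simp only [← sum_mul, hΨ]

theorem card_mul_sum_div_sum_mul_le_sum_and_eq_iff [Nonempty ι] (hsymm : Ψᵀ = Ψ)
    (hcol : ∀ j, ∑ i, Ψ i j = κ) {a : ι → ℝ} (ha : 0 < ∑ k, a k) :
    let b := Ψ *ᵥ fun j => Real.exp (-(Ψ *ᵥ a) j)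
    ((Fintype.card ι : ℝ) * ∑ j, (a j / ∑ k, a k) * b j ≤ ∑ i, b i) ∧
    ((Fintype.card ι : ℝ) * ∑ j, (a j / ∑ k, a k) * b j = ∑ i, b i ↔
      ∃ c, ∀ j, (Ψ *ᵥ a) j = c) := by
  intro b
  set S := ∑ k, a k
  set v := Ψ *ᵥ fun j => a j / S
  have hav : Ψ *ᵥ a = S • v := by
    rw [← mulVec_smul]; congr 1; ext j; simp [field]
  have hφ : StrictAnti fun x => Real.exp (-(S * x)) :=
    fun x y hxy => Real.exp_lt_exp.mpr (by nlinarith)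
  have hb : b = Ψ *ᵥ fun j => Real.exp (-(S * v j)) := by simp only [b, hav]; rfl
  have hsum : ∑ i, b i = (∑ j, v j) * ∑ j, Real.exp (-(S * v j)) := by
    rw [hb, sum_mulVec_eq_mul_sum_of_sum_col hcol, sum_mulVec_eq_mul_sum_of_sum_col hcol,
      ← sum_div, div_self ha.ne', mul_one]
  have hbar : ∑ j, (a j / S) * b j = ∑ j, v j * Real.exp (-(S * v j)) := by
    have := dotProduct_mulVec (fun j => a j / S) Ψ fun j => Real.exp (-(S * v j))
    rwa [← mulVec_transpose, hsymm, ← hb] at this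
  rw [hsum, hbar, hφ.card_mul_sum_mul_eq_iff, hav]
  refine ⟨hφ.card_mul_sum_mul_le v, ⟨fun ⟨c, hc⟩ => ⟨S * c, fun j => by simp [hc]⟩,
    fun ⟨c, hc⟩ => ⟨c / S, fun j => ?_⟩⟩⟩
  rw [eq_div_iff ha.ne', mul_comm, ← hc j]
  rfl

end SymmetricKernel

namespace Matrix

variable {n : ℕ} {H : Matrix (Fin (n + 1)) (Fin (n + 1)) ℝ}

theorem sum_mul_eq_ite_of_transpose_mul_self (hH : Hᵀ * H = ((n : ℝ) + 1) • 1) (i j : Fin (n + 1)) :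
    ∑ k, H k i * H k j = if i = j then (n : ℝ) + 1 else 0 := by
  simpa [mul_apply, one_apply] using congrFun (congrFun hH i) j

theorem sum_succ_col_eq_neg_one (hH : Hᵀ * H = ((n : ℝ) + 1) • 1) (hrow : ∀ j, H 0 j = 1)
    (hcol : ∀ i, H i 0 = 1) (j : Fin n) : ∑ i : Fin n, H i.succ j.succ = -1 := by
  have h := sum_mul_eq_ite_of_transpose_mul_self hH 0 j.succ
  simp only [hcol, one_mul, Fin.sum_univ_succ, hrow, if_neg (Fin.succ_ne_zero j).symm] at h
  linarith

theorem sum_succ_mul_succ (hH : Hᵀ * H = ((n : ℝ) + 1) • 1) (hrow : ∀ j, H 0 j = 1)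
    (i j : Fin n) :
    ∑ k : Fin n, H k.succ i.succ * H k.succ j.succ = (if i = j then (n : ℝ) + 1 else 0) - 1 := by
  have h := sum_mul_eq_ite_of_transpose_mul_self hH i.succ j.succ
  simp only [Fin.sum_univ_succ, hrow, one_mul, Fin.succ_inj] at h
  linarith

def onesSubCore (H : Matrix (Fin (n + 1)) (Fin (n + 1)) ℝ) : Matrix (Fin n) (Fin n) ℝ :=
  of fun i j => 1 - H i.succ j.succ

theorem onesSubCore_transpose (hH : Hᵀ = H) : (onesSubCore H)ᵀ = onesSubCore H := by
  ext i j
  simp only [onesSubCore, transpose_apply, of_apply]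
  rw [← transpose_apply H, hH]

theorem sum_onesSubCore_col (hH : Hᵀ * H = ((n : ℝ) + 1) • 1) (hrow : ∀ j, H 0 j = 1)
    (hcol : ∀ i, H i 0 = 1) (j : Fin n) : ∑ i, onesSubCore H i j = n + 1 := by
  simp [onesSubCore, sum_sub_distrib, sum_succ_col_eq_neg_one hH hrow hcol j]

theorem sum_onesSubCore_mul (hH : Hᵀ * H = ((n : ℝ) + 1) • 1) (hrow : ∀ j, H 0 j = 1)
    (hcol : ∀ i, H i 0 = 1) (i j : Fin n) :
    ∑ k, onesSubCore H k i * onesSubCore H k j = (n + 1) * (1 + if i = j then 1 else 0) := by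
  have expand : ∀ k, onesSubCore H k i * onesSubCore H k j =
      1 - H k.succ i.succ - H k.succ j.succ + H k.succ i.succ * H k.succ j.succ := fun k => by
    simp only [onesSubCore, of_apply]; ring
  simp only [expand, sum_add_distrib, sum_sub_distrib, sum_succ_col_eq_neg_one hH hrow hcol,
    sum_succ_mul_succ hH hrow, sum_const, card_univ, Fintype.card_fin, nsmul_eq_mul, mul_one]
  split_ifs <;> ring

theorem exists_const_of_onesSubCore_mulVec_eq_const (hH : Hᵀ * H = ((n : ℝ) + 1) • 1)
    (hrow : ∀ j, H 0 j = 1) (hcol : ∀ i, H i 0 = 1) {x : Fin n → ℝ} {c : ℝ}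
    (hx : ∀ j, (onesSubCore H *ᵥ x) j = c) : ∃ d, ∀ i, x i = d := by
  refine ⟨c - ∑ l, x l, fun i => ?_⟩
  -- `(J - X)ᵀ (J - X) = (n + 1) (J + I)`, so applying `(J - X)ᵀ` recovers `x` up to a constant
  have key : ∑ k, onesSubCore H k i * (onesSubCore H *ᵥ x) k = (n + 1) * (∑ l, x l + x i) :=
    calc ∑ k, onesSubCore H k i * (onesSubCore H *ᵥ x) k
        = ∑ l, (∑ k, onesSubCore H k i * onesSubCore H k l) * x l := by
          simp only [mulVec, dotProduct, mul_sum, sum_mul, mul_assoc]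
          exact sum_comm
      _ = ∑ l, (n + 1) * (x l + if i = l then x l else 0) := by
          simp only [sum_onesSubCore_mul hH hrow hcol]
          congr! 1 with l
          split_ifs <;> ring
      _ = (n + 1) * (∑ l, x l + x i) := by rw [← mul_sum, sum_add_distrib, sum_ite_eq]; simp
  simp only [hx, ← sum_mul, sum_onesSubCore_col hH hrow hcol] at key
  have hn : (n : ℝ) + 1 ≠ 0 := by positivity
  linarith [mul_left_cancel₀ hn key]

end Matrix

theorem pos_of_hasDerivAt_eq_mul {f g : ℝ → ℝ} (hg : ContinuousOn g (Set.Ici 0))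
    (hf : ∀ t ≥ 0, HasDerivAt f (f t * g t) t) (h0 : 0 < f 0) {T : ℝ} (hT : 0 ≤ T) :
    0 < f T := by
  -- `f · exp (-∫₀ g)` is constant; `g` is first extended continuously to all of `ℝ`
  set G : ℝ → ℝ := fun s => g (max s 0)
  have hG : Continuous G :=
    hg.comp_continuous (continuous_id.max continuous_const) fun s => le_max_right s 0
  set F : ℝ → ℝ := fun u => ∫ s in (0 : ℝ)..u, G s
  have hF : ∀ u, HasDerivAt F (G u) u := fun u => (hG.integral_hasStrictDerivAt 0 u).hasDerivAt
  have hderiv :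
      ∀ x ∈ Set.Ico 0 T, HasDerivWithinAt (fun s => f s * Real.exp (-F s)) 0 (Set.Ici x) x := by
    intro x hx
    have h := (hf x hx.1).mul (hF x).neg.exp
    simp only [G, max_eq_left hx.1] at h
    exact (h.congr_deriv (by ring)).hasDerivWithinAt
  have hcont : ContinuousOn (fun s => f s * Real.exp (-F s)) (Set.Icc 0 T) := fun s hs =>
    ((hf s hs.1).continuousAt.mul (hF s).continuousAt.neg.rexp).continuousWithinAt
  have h := constant_of_has_deriv_right_zero hcont hderiv T ⟨hT, le_rfl⟩
  simp only [F, intervalIntegral.integral_same, neg_zero, Real.exp_zero, mul_one] at h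
  exact pos_of_mul_pos_left (h ▸ h0) (Real.exp_pos _).le

theorem hasDerivAt_sum_log_div_sum {ι : Type*} [Fintype ι] {x : ℝ → ι → ℝ} {c : ι → ℝ} {t : ℝ}
    (hx : ∀ i, HasDerivAt (fun s => x s i) (x t i * c i) t) (hpos : ∀ i, 0 < x t i) :
    HasDerivAt (fun s => ∑ i, Real.log (x s i / ∑ j, x s j))
      (∑ i, c i - Fintype.card ι * ∑ j, (x t j / ∑ k, x t k) * c j) t := by
  have hS : HasDerivAt (fun s => ∑ j, x s j) (∑ j, x t j * c j) t :=
    HasDerivAt.fun_sum fun j _ => hx j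
  have hterm : ∀ i, HasDerivAt (fun s => Real.log (x s i / ∑ j, x s j))
      (c i - ∑ j, (x t j / ∑ k, x t k) * c j) t := by
    intro i
    have hSpos : 0 < ∑ j, x t j := sum_pos (fun j _ => hpos j) ⟨i, mem_univ i⟩
    refine (((hx i).div hS hSpos.ne').log (div_pos (hpos i) hSpos).ne').congr_deriv ?_
    simp only [Pi.div_apply, div_mul_eq_mul_div, ← sum_div]
    field_simp [(hpos i).ne']
  refine (HasDerivAt.fun_sum fun i (_ : i ∈ univ) => hterm i).congr_deriv ?_
  simp [sum_sub_distrib]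

theorem div_sum_eq_one_div_card_iff {ι : Type*} [Fintype ι] {x : ι → ℝ} (hx : ∀ i, 0 < x i) :
    (∀ i, x i / ∑ j, x j = 1 / Fintype.card ι) ↔ ∃ c, ∀ i, x i = c := by
  refine ⟨fun h => ⟨(∑ j, x j) / Fintype.card ι, fun i => ?_⟩, fun ⟨c, hc⟩ i => ?_⟩
  · have hS : 0 < ∑ j, x j := sum_pos (fun j _ => hx j) ⟨i, mem_univ i⟩
    rw [← one_div_mul_eq_div, ← h i]
    field_simp
  · have : Nonempty ι := ⟨i⟩
    have hN : (Fintype.card ι : ℝ) ≠ 0 := Nat.cast_ne_zero.mpr Fintype.card_ne_zero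
    have hc0 : c ≠ 0 := (hc i ▸ hx i).ne'
    simp only [hc, sum_const, card_univ, nsmul_eq_mul]
    field_simp

def finTwoPowSuccEquiv (m : ℕ) : Fin (2 ^ m) ⊕ Fin (2 ^ m) ≃ Fin (2 ^ (m + 1)) :=
  finSumFinEquiv.trans (finCongr (by ring))

theorem sylvester_succ (m : ℕ) :
    sylvester (m + 1) = reindex (finTwoPowSuccEquiv m) (finTwoPowSuccEquiv m)
      (fromBlocks (sylvester m) (sylvester m) (sylvester m) (-sylvester m)) := by
  ext i j
  obtain ⟨i, rfl⟩ := (finTwoPowSuccEquiv m).surjective i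
  obtain ⟨j, rfl⟩ := (finTwoPowSuccEquiv m).surjective j
  simp only [reindex_apply, submatrix_apply, Equiv.symm_apply_apply]
  rcases i with i | i <;> rcases j with j | j <;>
    simp [sylvester, finTwoPowSuccEquiv, Nat.mod_eq_of_lt]

theorem sylvester_mul_self (m : ℕ) : sylvester m * sylvester m = (2 ^ m : ℝ) • 1 := by
  induction m with
  | zero => ext i j; fin_cases i; fin_cases j; simp [sylvester, mul_apply]
  | succ m ih =>
    have hdiag : ∀ c : ℝ, fromBlocks (c • (1 : Matrix (Fin (2 ^ m)) (Fin (2 ^ m)) ℝ)) 0 0 (c • 1) =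
        c • (1 : Matrix (Fin (2 ^ m) ⊕ Fin (2 ^ m)) (Fin (2 ^ m) ⊕ Fin (2 ^ m)) ℝ) := by
      intro c; rw [← fromBlocks_one, fromBlocks_smul, smul_zero]
    rw [sylvester_succ, reindex_apply, submatrix_mul_equiv, fromBlocks_multiply]
    simp only [Matrix.neg_mul, Matrix.mul_neg, neg_neg, ih, add_neg_cancel]
    rw [← smul_add, ← two_smul ℝ (1 : Matrix _ _ ℝ), smul_smul, ← pow_succ, hdiag]
    simp [submatrix_smul]

theorem sylvester_zero_left (m : ℕ) (j : Fin (2 ^ m)) :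
    sylvester m ⟨0, Nat.two_pow_pos m⟩ j = 1 := by
  induction m with
  | zero => rfl
  | succ m ih => rw [sylvester, of_apply, if_neg (by simp), one_mul]; exact ih _

theorem sylvester_transpose (m : ℕ) : (sylvester m)ᵀ = sylvester m := by
  induction m with
  | zero => rfl
  | succ m ih => rw [sylvester_succ, transpose_reindex, fromBlocks_transpose, transpose_neg, ih]

/-- `Φ_{2^m}`, indexed so that `Fin.succ` splits off its first row and column. -/
def sylvesterFin (m : ℕ) : Matrix (Fin (2 ^ m - 1 + 1)) (Fin (2 ^ m - 1 + 1)) ℝ :=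
  reindex (finCongr (Nat.sub_add_cancel Nat.one_le_two_pow).symm)
    (finCongr (Nat.sub_add_cancel Nat.one_le_two_pow).symm) (sylvester m)

theorem PsiM_eq_onesSubCore (m : ℕ) : PsiM m = (sylvesterFin m).onesSubCore := rfl

theorem sylvesterFin_transpose (m : ℕ) : (sylvesterFin m)ᵀ = sylvesterFin m := by
  rw [sylvesterFin, transpose_reindex, sylvester_transpose]

theorem sylvesterFin_transpose_mul_self (m : ℕ) :
    (sylvesterFin m)ᵀ * sylvesterFin m = (((2 ^ m - 1 : ℕ) : ℝ) + 1) • 1 := by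
  rw [sylvesterFin_transpose, sylvesterFin, reindex_apply, submatrix_mul_equiv, sylvester_mul_self]
  simp [Nat.cast_sub Nat.one_le_two_pow, submatrix_smul]

theorem sylvesterFin_zero_left (m : ℕ) (j : Fin (2 ^ m - 1 + 1)) : sylvesterFin m 0 j = 1 :=
  sylvester_zero_left m _

theorem sylvesterFin_zero_right (m : ℕ) (i : Fin (2 ^ m - 1 + 1)) : sylvesterFin m i 0 = 1 :=
  calc sylvesterFin m i 0 = (sylvesterFin m)ᵀ 0 i := rfl
    _ = 1 := by rw [sylvesterFin_transpose, sylvesterFin_zero_left]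

theorem PsiM_transpose (m : ℕ) : (PsiM m)ᵀ = PsiM m :=
  onesSubCore_transpose (sylvesterFin_transpose m)

theorem sum_PsiM_col (m : ℕ) (j : Fin (2 ^ m - 1)) : ∑ i, PsiM m i j = 2 ^ m := by
  rw [PsiM_eq_onesSubCore, sum_onesSubCore_col (sylvesterFin_transpose_mul_self m)
    (sylvesterFin_zero_left m) (sylvesterFin_zero_right m), Nat.cast_sub Nat.one_le_two_pow]
  simp

theorem mulVec_PsiM_eq_const_iff (m : ℕ) {x : Fin (2 ^ m - 1) → ℝ} :
    (∃ c, ∀ j, (PsiM m *ᵥ x) j = c) ↔ ∃ c, ∀ i, x i = c := by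
  refine ⟨fun ⟨c, hc⟩ => exists_const_of_onesSubCore_mulVec_eq_const
    (sylvesterFin_transpose_mul_self m) (sylvesterFin_zero_left m) (sylvesterFin_zero_right m) hc,
    fun ⟨c, hc⟩ => ⟨c * 2 ^ m, fun j => ?_⟩⟩
  rw [← PsiM_transpose, mulVec_transpose]
  simp [vecMul, dotProduct, hc, ← mul_sum, sum_PsiM_col]

theorem two_pow_sub_one_pos {m : ℕ} (hm : 1 ≤ m) : (0 : ℝ) < 2 ^ m - 1 :=
  sub_pos.mpr (one_lt_pow₀ one_lt_two (by omega))

theorem card_fin_two_pow_sub_one (m : ℕ) : (Fintype.card (Fin (2 ^ m - 1)) : ℝ) = 2 ^ m - 1 := by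
  simp [Nat.cast_sub Nat.one_le_two_pow]

theorem sub_one_mul_bbar_le_sum_bVec_and_eq_iff (m : ℕ) (hm : 1 ≤ m) (a : Fin (2 ^ m - 1) → ℝ)
    (ha : ∀ i, 0 < a i) :
    ((2 : ℝ) ^ m - 1) * bbar m a ≤ ∑ i, bVec m a i ∧
      (((2 : ℝ) ^ m - 1) * bbar m a = ∑ i, bVec m a i ↔ ∃ c : ℝ, ∀ i, a i = c) := by
  have : Nonempty (Fin (2 ^ m - 1)) :=
    ⟨⟨0, Nat.sub_pos_of_lt (Nat.one_lt_two_pow (by omega))⟩⟩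
  have h := card_mul_sum_div_sum_mul_le_sum_and_eq_iff (PsiM_transpose m) (sum_PsiM_col m)
    (sum_pos (fun i _ => ha i) univ_nonempty)
  rw [card_fin_two_pow_sub_one, mulVec_PsiM_eq_const_iff] at h
  exact h

theorem continuous_bVec (m : ℕ) (i : Fin (2 ^ m - 1)) : Continuous fun a => bVec m a i := by
  unfold bVec; fun_prop

theorem continuous_Dden (m : ℕ) : Continuous (Dden m) := by
  unfold Dden; fun_prop

theorem Dden_pos (m : ℕ) (a : Fin (2 ^ m - 1) → ℝ) : 0 < Dden m a :=
  add_pos_of_pos_of_nonneg one_pos (sum_nonneg fun _ _ => (Real.exp_pos _).le)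

theorem pos_of_hasDerivAt_flow (m : ℕ) {a : ℝ → Fin (2 ^ m - 1) → ℝ}
    (hderiv : ∀ t ≥ (0 : ℝ), ∀ i, HasDerivAt (fun s => a s i)
      (a t i * bVec m (a t) i / Dden m (a t)) t)
    (hpos0 : ∀ i, 0 < a 0 i) {t : ℝ} (ht : 0 ≤ t) (i : Fin (2 ^ m - 1)) : 0 < a t i := by
  have ha : ContinuousOn a (Set.Ici 0) := continuousOn_pi.mpr fun j s hs =>
    (hderiv s hs j).continuousAt.continuousWithinAt
  have hrate : ContinuousOn (fun s => bVec m (a s) i / Dden m (a s)) (Set.Ici 0) :=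
    ((continuous_bVec m i).comp_continuousOn ha).div ((continuous_Dden m).comp_continuousOn ha)
      fun s _ => (Dden_pos m _).ne'
  exact pos_of_hasDerivAt_eq_mul hrate
    (fun s hs => (hderiv s hs i).congr_deriv (mul_div_assoc _ _ _)) (hpos0 i) ht

theorem hasDerivAt_klUnif {m : ℕ} (hm : 1 ≤ m) {x : ℝ → Fin (2 ^ m - 1) → ℝ}
    {c : Fin (2 ^ m - 1) → ℝ} {t : ℝ} (hx : ∀ i, HasDerivAt (fun s => x s i) (x t i * c i) t)
    (hpos : ∀ i, 0 < x t i) :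
    HasDerivAt (fun s => klUnif m (x s))
      (∑ j, (x t j / ∑ k, x t k) * c j - (∑ i, c i) / ((2 : ℝ) ^ m - 1)) t := by
  have hn := (two_pow_sub_one_pos hm).ne'
  refine ((hasDerivAt_const t _).sub
    ((hasDerivAt_sum_log_div_sum hx hpos).const_mul (1 / ((2 : ℝ) ^ m - 1)))).congr_deriv ?_
  rw [card_fin_two_pow_sub_one]
  field_simp
  ring

/-- the key inequality behind the Lyapunov property of the KL divergence.
For every `a` with positive entries, `(K−1)·b̄(a) ≤ Σ_i b_i(a)`, with equality iff `a ∝ 1`.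
Consequently, along any solution of the reduced cross-entropy gradient flow with positive
initialization, `D_KL((1/(K−1))·1 ‖ â(t))` has nonpositive time derivative, vanishing only
when `â(t) = (1/(K−1))·1`. -/
theorem kl_divergence_derivative_nonpos (m : ℕ) (hm : 1 ≤ m) :
    (∀ a : Fin (2 ^ m - 1) → ℝ, (∀ i, 0 < a i) →
      (((2 : ℝ) ^ m - 1) * bbar m a ≤ ∑ i, bVec m a i ∧
       (((2 : ℝ) ^ m - 1) * bbar m a = ∑ i, bVec m a i ↔ ∃ c : ℝ, ∀ i, a i = c))) ∧
    (∀ a : ℝ → Fin (2 ^ m - 1) → ℝ,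
      (∀ t ≥ (0 : ℝ), ∀ i, HasDerivAt (fun s => a s i)
          (a t i * bVec m (a t) i / Dden m (a t)) t) →
      (∀ i, 0 < a 0 i) →
      ∀ t ≥ (0 : ℝ), ∃ d : ℝ,
        HasDerivAt (fun s => klUnif m (a s)) d t ∧ d ≤ 0 ∧
        (d = 0 ↔ ∀ i, a t i / (∑ j, a t j) = 1 / ((2 : ℝ) ^ m - 1))) := by
  refine ⟨sub_one_mul_bbar_le_sum_bVec_and_eq_iff m hm, fun a hderiv hpos0 t ht => ?_⟩
  have hpos := pos_of_hasDerivAt_flow m hderiv hpos0 ht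
  have hn := two_pow_sub_one_pos hm
  have hD := Dden_pos m (a t)
  obtain ⟨hle, heq⟩ := sub_one_mul_bbar_le_sum_bVec_and_eq_iff m hm (a t) hpos
  have hd := hasDerivAt_klUnif hm (c := fun i => bVec m (a t) i / Dden m (a t))
    (fun i => (hderiv t ht i).congr_deriv (mul_div_assoc _ _ _)) hpos
  have hform : ∑ j, (a t j / ∑ k, a t k) * (bVec m (a t) j / Dden m (a t)) -
      (∑ i, bVec m (a t) i / Dden m (a t)) / (2 ^ m - 1) =
      ((2 ^ m - 1) * bbar m (a t) - ∑ i, bVec m (a t) i) / ((2 ^ m - 1) * Dden m (a t)) := by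
    simp only [bbar, mul_div_assoc', ← sum_div]
    field_simp
  refine ⟨_, hd, ?_, ?_⟩
  · rw [hform]
    exact div_nonpos_of_nonpos_of_nonneg (by linarith) (by positivity)
  · rw [hform, div_eq_zero_iff, or_iff_left (by positivity), sub_eq_zero, heq,
      ← div_sum_eq_one_div_card_iff hpos, card_fin_two_pow_sub_one]
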